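/- arXiv:1911.07390 — 3 statements merged into one kernel-verified Lean document; each statement's English description precedes it below -/
import Mathlib

section
/- Let A be a stochastic N×N matrix (nonnegative entries, each row summing to 1), and let Z, B, W be N×d real matrices with W = A·Z + B. Denote by z_i, b_i, w_i the i-th rows. Then max_{i,k} ‖w_i - w_k‖ ≤ (1 - μ(A))·max_{l,m} ‖z_l - z_m‖ + √2·‖B‖_F, where μ(A) is the ergodicity coefficient and ‖B‖_F the Frobenius norm. -/
/-- The ergodicity coefficient of a matrix. -/
noncomputable def ergCoeff {N : ℕ} (A : Matrix (Fin N) (Fin N) ℝ) : ℝ :=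
  ⨅ i : Fin N, ⨅ j : Fin N, ∑ k : Fin N, min (A i k) (A j k)

/-- The `i`-th row of an `N × d` matrix, as a point of Euclidean space. -/
noncomputable def row {N d : ℕ} (M : Matrix (Fin N) (Fin d) ℝ) (i : Fin N) :
    EuclideanSpace ℝ (Fin d) :=
  (WithLp.equiv 2 (Fin d → ℝ)).symm (M i)

/-- The Frobenius norm of a matrix. -/
noncomputable def frobNorm {N d : ℕ} (M : Matrix (Fin N) (Fin d) ℝ) : ℝ :=
  Real.sqrt (∑ i : Fin N, ∑ j : Fin d, (M i j) ^ 2)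

lemma sum_smul_apply {N d : ℕ} (z : Fin N → EuclideanSpace ℝ (Fin d)) (c : Fin N → ℝ)
    (x : Fin d) : (∑ j, c j • z j) x = ∑ j, c j * z j x := by
  induction (Finset.univ : Finset (Fin N)) using Finset.induction with
  | empty => simp
  | @insert a s h ih => simp [Finset.sum_insert h, ih]

lemma key_smul_sum {N d : ℕ} (z : Fin N → EuclideanSpace ℝ (Fin d)) (p q : Fin N → ℝ)
    (hp : ∀ j, 0 ≤ p j) (hq : ∀ j, 0 ≤ q j) (s : ℝ)
    (hps : ∑ j, p j = s) (hqs : ∑ j, q j = s) (D : ℝ)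
    (hD : ∀ j l, ‖z j - z l‖ ≤ D) :
    ‖∑ j, (p j - q j) • z j‖ ≤ s * D := by
  have hs : 0 ≤ s := hps ▸ Finset.sum_nonneg fun j _ => hp j
  rcases eq_or_lt_of_le hs with hs0 | hs0
  · have hp0 : ∀ j ∈ Finset.univ, p j = 0 :=
      (Finset.sum_eq_zero_iff_of_nonneg (fun j _ => hp j)).mp (hps.trans hs0.symm)
    have hq0 : ∀ j ∈ Finset.univ, q j = 0 :=
      (Finset.sum_eq_zero_iff_of_nonneg (fun j _ => hq j)).mp (hqs.trans hs0.symm)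
    have : ∑ j, (p j - q j) • z j = 0 := by
      apply Finset.sum_eq_zero
      intro j hj
      rw [hp0 j hj, hq0 j hj, sub_self, zero_smul]
    rw [this, norm_zero, ← hs0, zero_mul]
  · have h1 : ∀ j, ∑ l, (p j * q l) • z j = (s * p j) • z j := by
      intro j
      rw [← Finset.sum_smul, ← Finset.mul_sum, hqs, mul_comm]
    have h2 : ∑ j : Fin N, ∑ l : Fin N, (p j * q l) • z l = ∑ l : Fin N, (s * q l) • z l := by
      rw [Finset.sum_comm]
      refine Finset.sum_congr rfl fun l _ => ?_
      rw [← Finset.sum_smul, ← Finset.sum_mul, hps]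
    have key : s • (∑ j, (p j - q j) • z j) = ∑ j, ∑ l, (p j * q l) • (z j - z l) := by
      calc s • ∑ j, (p j - q j) • z j
          = (∑ j, (s * p j) • z j) - ∑ j, (s * q j) • z j := by
            rw [Finset.smul_sum, ← Finset.sum_sub_distrib]
            exact Finset.sum_congr rfl fun j _ => by rw [smul_smul, mul_sub, sub_smul]
        _ = (∑ j, ∑ l, (p j * q l) • z j) - ∑ j, ∑ l, (p j * q l) • z l := by
            rw [h2]
            congr 1
            exact Finset.sum_congr rfl fun j _ => (h1 j).symm
        _ = ∑ j, ∑ l, (p j * q l) • (z j - z l) := by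
            rw [← Finset.sum_sub_distrib]
            refine Finset.sum_congr rfl fun j _ => ?_
            rw [← Finset.sum_sub_distrib]
            exact Finset.sum_congr rfl fun l _ => (smul_sub _ _ _).symm
    have hnorm : s * ‖∑ j, (p j - q j) • z j‖ ≤ s * (s * D) := by
      have h3 : ‖s • ∑ j, (p j - q j) • z j‖ = s * ‖∑ j, (p j - q j) • z j‖ := by
        rw [norm_smul, Real.norm_of_nonneg hs]
      rw [← h3, key]
      calc ‖∑ j, ∑ l, (p j * q l) • (z j - z l)‖
          ≤ ∑ j, ∑ l, ‖(p j * q l) • (z j - z l)‖ :=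
            (norm_sum_le _ _).trans (Finset.sum_le_sum fun j _ => norm_sum_le _ _)
        _ ≤ ∑ j, ∑ l, (p j * q l) * D := by
            refine Finset.sum_le_sum fun j _ => Finset.sum_le_sum fun l _ => ?_
            rw [norm_smul, Real.norm_of_nonneg (mul_nonneg (hp j) (hq l))]
            exact mul_le_mul_of_nonneg_left (hD j l) (mul_nonneg (hp j) (hq l))
        _ = s * (s * D) := by
            simp_rw [mul_assoc, ← Finset.mul_sum, ← Finset.sum_mul, hqs, hps]
    exact (mul_le_mul_iff_right₀ hs0).mp hnorm

lemma bpart {N d : ℕ} (B : Matrix (Fin N) (Fin d) ℝ) (i k : Fin N) :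
    ‖row B i - row B k‖ ≤ Real.sqrt 2 * frobNorm B := by
  have hnorm : ‖row B i - row B k‖ = Real.sqrt (∑ x, (B i x - B k x) ^ 2) := by
    rw [EuclideanSpace.norm_eq]
    congr 1
    exact Finset.sum_congr rfl fun x _ => by
      simp [row, WithLp.equiv_symm_apply, Real.norm_eq_abs, sq_abs]
  by_cases hik : i = k
  · subst hik
    rw [hnorm]
    simp only [sub_self]
    rw [show (∑ x : Fin d, (0:ℝ) ^ 2) = 0 by simp, Real.sqrt_zero]
    have : 0 ≤ frobNorm B := Real.sqrt_nonneg _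
    positivity
  · rw [hnorm, frobNorm, ← Real.sqrt_mul (by norm_num : (0:ℝ) ≤ 2)]
    apply Real.sqrt_le_sqrt
    have h1 : ∑ x, (B i x - B k x) ^ 2 ≤ ∑ x, 2 * ((B i x) ^ 2 + (B k x) ^ 2) :=
      Finset.sum_le_sum fun x _ => by nlinarith [sq_nonneg (B i x + B k x)]
    have h2 : (∑ x, (B i x) ^ 2) + (∑ x, (B k x) ^ 2) ≤ ∑ i', ∑ x, (B i' x) ^ 2 := by
      have hsub := Finset.sum_le_sum_of_subset_of_nonneg
        (f := fun i' => ∑ x, (B i' x) ^ 2)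
        (Finset.subset_univ ({i, k} : Finset (Fin N)))
        (fun i' _ _ => Finset.sum_nonneg fun x _ => sq_nonneg _)
      rwa [Finset.sum_insert (by simpa using hik), Finset.sum_singleton] at hsub
    have h3 : ∑ x, 2 * ((B i x) ^ 2 + (B k x) ^ 2)
        = 2 * ((∑ x, (B i x) ^ 2) + (∑ x, (B k x) ^ 2)) := by
      rw [← Finset.mul_sum, Finset.sum_add_distrib]
    linarith

theorem diameter_contraction {N d : ℕ} (hN : 0 < N)
    (A : Matrix (Fin N) (Fin N) ℝ)
    (hA : ∀ i j, 0 ≤ A i j) (hstoch : ∀ i, ∑ j, A i j = 1)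
    (Z B W : Matrix (Fin N) (Fin d) ℝ) (hW : W = A * Z + B) :
    ∀ i k : Fin N, ‖row W i - row W k‖ ≤
      (1 - ergCoeff A) * (⨆ p : Fin N × Fin N, ‖row Z p.1 - row Z p.2‖) +
        Real.sqrt 2 * frobNorm B := by
  intro i k
  have hbdd : BddAbove (Set.range fun p : Fin N × Fin N => ‖row Z p.1 - row Z p.2‖) :=
    (Set.finite_range _).bddAbove
  set D := ⨆ p : Fin N × Fin N, ‖row Z p.1 - row Z p.2‖ with hDdef
  have hD : ∀ j l : Fin N, ‖row Z j - row Z l‖ ≤ D := fun j l => le_ciSup hbdd (j, l)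
  have hD0 : 0 ≤ D := le_trans (norm_nonneg _) (hD ⟨0, hN⟩ ⟨0, hN⟩)
  have hmu_le : ∀ a b : Fin N, ergCoeff A ≤ ∑ m, min (A a m) (A b m) := by
    intro a b
    unfold ergCoeff
    refine le_trans (ciInf_le (Set.finite_range _).bddBelow a) ?_
    exact ciInf_le (Set.finite_range _).bddBelow b
  -- decomposition
  have hdecomp : row W i - row W k
      = (∑ j, (A i j - A k j) • row Z j) + (row B i - row B k) := by
    have hx : ∀ x, (row W i - row W k) x
        = ((∑ j, (A i j - A k j) • row Z j) + (row B i - row B k)) x := by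
      intro x
      have happ : (∑ j, (A i j - A k j) • row Z j) x = ∑ j, (A i j - A k j) * Z j x := by
        rw [sum_smul_apply]
        exact Finset.sum_congr rfl fun j _ => by simp [row]
      have hw : ∀ i', W i' x = (∑ j, A i' j * Z j x) + B i' x := by
        intro i'
        rw [hW]
        simp [Matrix.add_apply, Matrix.mul_apply]
      show W i x - W k x = (∑ j, (A i j - A k j) • row Z j) x + (B i x - B k x)
      rw [happ, hw, hw]
      simp_rw [sub_mul, Finset.sum_sub_distrib]
      ring
    exact PiLp.ext hx
  rw [hdecomp]
  refine (norm_add_le _ _).trans (add_le_add ?_ (bpart B i k))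
  -- main term
  set c : Fin N → ℝ := fun j => min (A i j) (A k j) with hc
  have hcsum : ∀ a : Fin N, (∑ j, (A a j - c j)) = 1 - ∑ j, c j := by
    intro a
    rw [Finset.sum_sub_distrib, hstoch]
  have key := key_smul_sum (fun j => row Z j) (fun j => A i j - c j) (fun j => A k j - c j)
    (fun j => sub_nonneg.mpr (min_le_left _ _)) (fun j => sub_nonneg.mpr (min_le_right _ _))
    (1 - ∑ j, c j) (hcsum i) (hcsum k) D hD
  have hsum_eq : ∑ j, ((A i j - c j) - (A k j - c j)) • row Z j
      = ∑ j, (A i j - A k j) • row Z j :=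
    Finset.sum_congr rfl fun j _ => by rw [sub_sub_sub_cancel_right]
  rw [hsum_eq] at key
  refine key.trans ?_
  have hmle : 1 - ∑ j, c j ≤ 1 - ergCoeff A := by
    have := hmu_le i k
    simp only [hc]
    linarith
  exact mul_le_mul_of_nonneg_right hmle hD0
end

section
/- Let x₁,…,x_N, v₁,…,v_N : [0,∞) → ℝ^d solve the Cucker–Smale system x_i' = v_i, v_i' = (1/N)·∑_{j=1}^N χ_{ij}(t)·φ(‖x_j - x_i‖)·(v_j - v_i), where χ_{ij}(t) ∈ {0,1} and φ ≥ 0. Then the velocity diameter D(V)(t) := max_{i,j} ‖v_i(t) - v_j(t)‖ is non-increasing in t. -/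
/-!
Put `D(t)² = maxᵢⱼ ‖vᵢ(t) - vⱼ(t)‖²`. At a pair `(p, q)` realising the maximum, every velocity
`vₖ` lies in the ball of radius `‖v_p - v_q‖` around `v_q`, and also around `v_p`, so each term
`vₖ - v_p` of the alignment force on `p` points away from `v_p - v_q` and each term `vₖ - v_q`
points along it. Hence `‖v_p - v_q‖²` has nonpositive derivative whenever it is maximal, and the
maximum of finitely many functions with this property cannot increase (the right Dini derivative
of the maximum is at most `0`).
-/

open Filter Topology Set
open scoped RealInnerProductSpace

section SupOfDifferentiable

variable {ι : Type*} {g g' : ι → ℝ → ℝ}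

theorem continuous_ciSup_of_finite [Finite ι] [Nonempty ι] (hg : ∀ i, Continuous (g i)) :
    Continuous fun t => ⨆ i, g i t := by
  have := Fintype.ofFinite ι
  simp_rw [← Finset.sup'_univ_eq_ciSup]
  exact Continuous.finset_sup'_apply Finset.univ_nonempty fun i _ => hg i

theorem eventually_slope_ciSup_lt [Finite ι] [Nonempty ι] {τ r : ℝ}
    (hg : ∀ i, HasDerivAt (g i) (g' i τ) τ) (hd : ∀ i, (∀ j, g j τ ≤ g i τ) → g' i τ ≤ 0)
    (hr : 0 < r) : ∀ᶠ z in 𝓝[>] τ, slope (fun t => ⨆ i, g i t) τ z < r := by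
  set M := fun t => ⨆ i, g i t
  have hle : ∀ i t, g i t ≤ M t := fun i t =>
    le_ciSup (f := fun i => g i t) (Finite.bddAbove_range _) i
  have hlocal : ∀ i, ∀ᶠ z in 𝓝[>] τ, g i z - M τ < r * (z - τ) := by
    intro i
    rcases (hle i τ).eq_or_lt with hmax | hsub
    · have hslope : ∀ᶠ z in 𝓝[≠] τ, slope (g i) τ z < r :=
        (hasDerivAt_iff_tendsto_slope.1 (hg i)).eventually_lt_const
          ((hd i fun j => hmax ▸ hle j τ).trans_lt hr)
      filter_upwards [nhdsWithin_mono τ (fun _ hz => ne_of_gt hz) hslope,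
        self_mem_nhdsWithin] with z hz hzτ
      rw [slope_def_field, div_lt_iff₀ (sub_pos.2 hzτ)] at hz
      rwa [← hmax]
    · filter_upwards [eventually_nhdsWithin_of_eventually_nhds
        ((hg i).continuousAt.eventually_lt continuousAt_const hsub), self_mem_nhdsWithin]
        with z hz hzτ
      nlinarith [sub_pos.2 (show τ < z from hzτ)]
  filter_upwards [eventually_all.2 hlocal, self_mem_nhdsWithin] with z hz hzτ
  obtain ⟨i, hi⟩ := exists_eq_ciSup_of_finite (f := fun i => g i z)
  rw [slope_def_field, div_lt_iff₀ (sub_pos.2 hzτ)]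
  show (⨆ i, g i z) - M τ < r * (z - τ)
  exact hi ▸ hz i

theorem antitone_ciSup_of_hasDerivAt [Finite ι] (hg : ∀ i t, HasDerivAt (g i) (g' i t) t)
    (hd : ∀ i t, (∀ j, g j t ≤ g i t) → g' i t ≤ 0) : Antitone fun t => ⨆ i, g i t := by
  rcases isEmpty_or_nonempty ι with _ | _
  · simp [antitone_const]
  intro s t hst
  refine image_le_of_liminf_slope_right_le_deriv_boundary (B := fun _ => ⨆ i, g i s) (B' := 0)
    (continuous_ciSup_of_finite fun i => continuous_iff_continuousAt.2 fun τ =>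
      (hg i τ).continuousAt).continuousOn le_rfl continuousOn_const
    (fun _ _ => hasDerivWithinAt_const _ _ _)
    (fun τ _ r hr => (eventually_slope_ciSup_lt (fun i => hg i τ) (hd · τ) hr).frequently)
    ⟨hst, le_rfl⟩

end SupOfDifferentiable

section InnerProductSpace

variable {E : Type*} [NormedAddCommGroup E] [InnerProductSpace ℝ E]

theorem inner_sub_sub_nonpos_of_norm_sub_le {a b c : E} (h : ‖c - b‖ ≤ ‖a - b‖) :
    ⟪c - a, a - b⟫ ≤ 0 := by
  have hexp : ‖c - b‖ ^ 2 = ‖c - a‖ ^ 2 + 2 * ⟪c - a, a - b⟫ + ‖a - b‖ ^ 2 := by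
    rw [show c - b = (c - a) + (a - b) by abel, norm_add_sq_real]
  nlinarith [sq_nonneg ‖c - a‖, norm_nonneg (c - b)]

end InnerProductSpace

namespace CuckerSmale

variable {ι E : Type*} [Fintype ι] [NormedAddCommGroup E] [InnerProductSpace ℝ E]

def alignment (c : ι → ι → ℝ) (u : ι → E) (i : ι) : E :=
  ∑ j, c i j • (u j - u i)

theorem inner_alignment_sub_alignment_nonpos {c : ι → ι → ℝ} (hc : ∀ i j, 0 ≤ c i j)
    {u : ι → E} {p q : ι} (hmax : ∀ i j, ‖u i - u j‖ ≤ ‖u p - u q‖) :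
    ⟪u p - u q, alignment c u p - alignment c u q⟫ ≤ 0 := by
  have hp : ∀ k, ⟪u p - u q, c p k • (u k - u p)⟫ ≤ 0 := fun k => by
    rw [real_inner_smul_right, real_inner_comm]
    exact mul_nonpos_of_nonneg_of_nonpos (hc p k)
      (inner_sub_sub_nonpos_of_norm_sub_le (hmax k q))
  have hq : ∀ k, 0 ≤ ⟪u p - u q, c q k • (u k - u q)⟫ := fun k => by
    have h := inner_sub_sub_nonpos_of_norm_sub_le ((hmax k p).trans (norm_sub_rev (u p) (u q)).le)
    rw [real_inner_smul_right, real_inner_comm, ← neg_sub (u q) (u p), inner_neg_right]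
    exact mul_nonneg (hc q k) (neg_nonneg.2 h)
  rw [alignment, alignment, inner_sub_right, inner_sum, inner_sum]
  exact sub_nonpos.2 ((Finset.sum_nonpos fun k _ => hp k).trans (Finset.sum_nonneg fun k _ => hq k))

theorem antitone_iSup_norm_sub {c : ℝ → ι → ι → ℝ} (hc : ∀ t i j, 0 ≤ c t i j)
    {u : ι → ℝ → E} (hu : ∀ i t, HasDerivAt (u i) (alignment (c t) (u · t) i) t) :
    Antitone fun t => ⨆ p : ι × ι, ‖u p.1 t - u p.2 t‖ := by
  -- squared, since the norm is not differentiable where two velocities coincide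
  have hsq : Antitone fun t => ⨆ p : ι × ι, ‖u p.1 t - u p.2 t‖ ^ 2 := by
    refine antitone_ciSup_of_hasDerivAt (g := fun (p : ι × ι) t => ‖u p.1 t - u p.2 t‖ ^ 2)
      (fun p t => ((hu p.1 t).sub (hu p.2 t)).norm_sq) fun p t hmax => ?_
    refine mul_nonpos_of_nonneg_of_nonpos zero_le_two
      (inner_alignment_sub_alignment_nonpos (u := (u · t)) (hc t) fun i j => ?_)
    exact (pow_le_pow_iff_left₀ (norm_nonneg _) (norm_nonneg _) two_ne_zero).1 (hmax (i, j))
  intro s t hst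
  refine le_of_pow_le_pow_left₀ two_ne_zero (Real.iSup_nonneg fun _ => norm_nonneg _) ?_
  simp_rw [Real.iSup_pow_of_ne_zero (fun _ => norm_nonneg _) two_ne_zero]
  exact hsq hst

end CuckerSmale

theorem velocity_diameter_nonincreasing_general {N d : ℕ}
    (x v : Fin N → ℝ → EuclideanSpace ℝ (Fin d))
    (χ : Fin N → Fin N → ℝ → ℝ) (hχ : ∀ i j t, χ i j t = 0 ∨ χ i j t = 1)
    (φ : ℝ → ℝ) (hφ : ∀ r, 0 ≤ φ r)
    (hv : ∀ i t, HasDerivAt (v i)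
      ((N : ℝ)⁻¹ • ∑ j : Fin N, (χ i j t * φ ‖x j t - x i t‖) • (v j t - v i t)) t) :
    ∀ s t : ℝ, 0 ≤ s → s ≤ t →
      (⨆ p : Fin N × Fin N, ‖v p.1 t - v p.2 t‖) ≤
      (⨆ p : Fin N × Fin N, ‖v p.1 s - v p.2 s‖) := by
  intro s t _ hst
  set c : ℝ → Fin N → Fin N → ℝ := fun τ i j => (N : ℝ)⁻¹ * (χ i j τ * φ ‖x j τ - x i τ‖)
  have hc : ∀ τ i j, 0 ≤ c τ i j := fun τ i j => by
    have hχ_nonneg : 0 ≤ χ i j τ := by rcases hχ i j τ with h | h <;> simp [h]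
    exact mul_nonneg (by positivity) (mul_nonneg hχ_nonneg (hφ _))
  have hv' : ∀ i τ, HasDerivAt (v i) (CuckerSmale.alignment (c τ) (v · τ) i) τ := by
    simpa only [CuckerSmale.alignment, c, Finset.smul_sum, smul_smul] using hv
  exact CuckerSmale.antitone_iSup_norm_sub hc hv' hst

theorem velocity_diameter_nonincreasing {N d : ℕ} (hN : 0 < N)
    (x v : Fin N → ℝ → EuclideanSpace ℝ (Fin d))
    (χ : Fin N → Fin N → ℝ → ℝ) (hχ : ∀ i j t, χ i j t = 0 ∨ χ i j t = 1)
    (φ : ℝ → ℝ) (hφ : ∀ r, 0 ≤ φ r)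
    (hx : ∀ i t, HasDerivAt (x i) (v i t) t)
    (hv : ∀ i t, HasDerivAt (v i)
      ((N : ℝ)⁻¹ • ∑ j : Fin N, (χ i j t * φ ‖x j t - x i t‖) • (v j t - v i t)) t) :
    ∀ s t : ℝ, 0 ≤ s → s ≤ t →
      (⨆ p : Fin N × Fin N, ‖v p.1 t - v p.2 t‖) ≤
      (⨆ p : Fin N × Fin N, ‖v p.1 s - v p.2 s‖) :=
  velocity_diameter_nonincreasing_general x v χ hχ φ hφ hv
end

section
/- Let A₁, …, A_{N-1} be nonnegative N×N matrices with positive diagonal entries such that for each i, the directed graph G(A_i) (with edge (j,l) whenever (A_i)_{lj} > 0) has a spanning tree. Then the product A₁A₂⋯A_{N-1} is a scrambling matrix. -/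
/-- The digraph of a nonnegative matrix has a spanning tree: there is a root
from which every vertex is reachable along directed edges, where there is an
edge from `j` to `i` iff `A i j > 0`. -/
def HasSpanningTree {N : ℕ} (A : Matrix (Fin N) (Fin N) ℝ) : Prop :=
  ∃ root : Fin N, ∀ i : Fin N,
    Relation.ReflTransGen (fun j i => 0 < A i j) root i

/-- A nonnegative matrix is scrambling if every pair of rows has a common
column with positive entries. -/
def Scrambling {N : ℕ} (A : Matrix (Fin N) (Fin N) ℝ) : Prop :=
  ∀ i j : Fin N, ∃ k : Fin N, 0 < A i k ∧ 0 < A j k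


/-!
Follow the supports of two rows `i`, `j` of the partial products `A₁ ⋯ Aₜ`. Right
multiplication by `M` replaces a support `S` by `S` together with all its in-neighbours in
`G(M)`; positive diagonals make supports grow monotonically. If after a step the two supports
are still disjoint, their union must have grown: otherwise both supports would be closed under
in-neighbours, hence both would contain the root of a spanning tree of `G(M)`. So while the rows
share no column, the union gains a vertex per factor, and after `N - 1` factors it would exceed
`N` vertices.
-/

open Finset

namespace Matrix

variable {ι : Type*}

def IsNonnegPosDiag (B : Matrix ι ι ℝ) : Prop :=
  (∀ k l, 0 ≤ B k l) ∧ ∀ k, 0 < B k k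

lemma IsNonnegPosDiag.one [DecidableEq ι] : IsNonnegPosDiag (1 : Matrix ι ι ℝ) :=
  ⟨fun k l => by by_cases h : k = l <;> simp [one_apply, h], fun k => by simp⟩

variable [Fintype ι]

noncomputable def rowSupport (B : Matrix ι ι ℝ) (i : ι) : Finset ι :=
  {k | 0 < B i k}

/-- The in-neighbours of `S` in `G(M)`. -/
noncomputable def inNeighbors (M : Matrix ι ι ℝ) (S : Finset ι) : Finset ι :=
  {k | ∃ j ∈ S, 0 < M j k}

lemma mul_apply_pos_iff {B C : Matrix ι ι ℝ} (hB : ∀ k l, 0 ≤ B k l) (hC : ∀ k l, 0 ≤ C k l)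
    (i k : ι) : 0 < (B * C) i k ↔ ∃ j, 0 < B i j ∧ 0 < C j k := by
  rw [mul_apply, sum_pos_iff_of_nonneg fun j _ => mul_nonneg (hB i j) (hC j k)]
  simp only [mem_univ, true_and]
  refine exists_congr fun j => ⟨fun h => ?_, fun h => mul_pos h.1 h.2⟩
  exact ⟨pos_of_mul_pos_left h (hC j k), pos_of_mul_pos_right h (hB i j)⟩

lemma rowSupport_mul {B M : Matrix ι ι ℝ} (hB : ∀ k l, 0 ≤ B k l) (hM : ∀ k l, 0 ≤ M k l)
    (i : ι) : rowSupport (B * M) i = inNeighbors M (rowSupport B i) := by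
  ext k
  simp [rowSupport, inNeighbors, mul_apply_pos_iff hB hM]

lemma rowSupport_one [DecidableEq ι] (i : ι) : rowSupport (1 : Matrix ι ι ℝ) i = {i} := by
  ext k
  rw [rowSupport, mem_filter_univ, mem_singleton, one_apply]
  by_cases h : i = k <;> simp [h, eq_comm]

lemma subset_inNeighbors {M : Matrix ι ι ℝ} (hdiag : ∀ k, 0 < M k k) (S : Finset ι) :
    S ⊆ inNeighbors M S := fun k hk => by
  simpa [inNeighbors] using ⟨k, hk, hdiag k⟩

namespace IsNonnegPosDiag

lemma mul {B C : Matrix ι ι ℝ} (hB : IsNonnegPosDiag B) (hC : IsNonnegPosDiag C) :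
    IsNonnegPosDiag (B * C) :=
  ⟨fun k l => sum_nonneg fun j _ => mul_nonneg (hB.1 k j) (hC.1 j l),
    fun k => (mul_apply_pos_iff hB.1 hC.1 k k).2 ⟨k, hB.2 k, hC.2 k⟩⟩

lemma list_prod [DecidableEq ι] {L : List (Matrix ι ι ℝ)} (hL : ∀ M ∈ L, IsNonnegPosDiag M) :
    IsNonnegPosDiag L.prod :=
  List.prod_induction _ (fun _ _ => mul) one hL

lemma self_mem_rowSupport {B : Matrix ι ι ℝ} (hB : IsNonnegPosDiag B) (i : ι) :
    i ∈ rowSupport B i := by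
  simpa [rowSupport] using hB.2 i

end IsNonnegPosDiag

lemma mem_of_reflTransGen {M : Matrix ι ι ℝ} {S : Finset ι} (hS : inNeighbors M S ⊆ S)
    {a b : ι} (h : Relation.ReflTransGen (fun j i => 0 < M i j) a b) (hb : b ∈ S) : a ∈ S := by
  induction h with
  | refl => exact hb
  | tail _ hedge ih => exact ih (hS (by simpa [inNeighbors] using ⟨_, hb, hedge⟩))

end Matrix

open Matrix

section

variable {N : ℕ}

lemma HasSpanningTree.not_disjoint {M : Matrix (Fin N) (Fin N) ℝ} (htree : HasSpanningTree M)
    {S T : Finset (Fin N)} (hS : S.Nonempty) (hT : T.Nonempty)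
    (hSc : inNeighbors M S ⊆ S) (hTc : inNeighbors M T ⊆ T) : ¬Disjoint S T := by
  obtain ⟨root, hroot⟩ := htree
  obtain ⟨s, hs⟩ := hS
  obtain ⟨t, ht⟩ := hT
  exact not_disjoint_iff.2
    ⟨root, mem_of_reflTransGen hSc (hroot s) hs, mem_of_reflTransGen hTc (hroot t) ht⟩

lemma HasSpanningTree.card_union_lt_of_disjoint_inNeighbors {M : Matrix (Fin N) (Fin N) ℝ}
    (htree : HasSpanningTree M) (hdiag : ∀ k, 0 < M k k) {S T : Finset (Fin N)}
    (hS : S.Nonempty) (hT : T.Nonempty) (h : Disjoint (inNeighbors M S) (inNeighbors M T)) :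
    #(S ∪ T) < #(inNeighbors M S ∪ inNeighbors M T) := by
  have hS' := subset_inNeighbors hdiag S
  have hT' := subset_inNeighbors hdiag T
  refine card_lt_card (Finset.ssubset_iff_subset_ne.2 ⟨union_subset_union hS' hT', fun heq => ?_⟩)
  have hSc : inNeighbors M S ⊆ S := fun k hk =>
    (mem_union.1 (heq ▸ mem_union_left _ hk)).resolve_right fun hkT =>
      disjoint_left.1 h hk (hT' hkT)
  have hTc : inNeighbors M T ⊆ T := fun k hk =>
    (mem_union.1 (heq ▸ mem_union_right _ hk)).resolve_left fun hkS =>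
      disjoint_left.1 h (hS' hkS) hk
  exact htree.not_disjoint hS hT hSc hTc (h.mono hS' hT')

lemma length_add_two_le_card_rowSupport_union {L : List (Matrix (Fin N) (Fin N) ℝ)}
    (hL : ∀ M ∈ L, IsNonnegPosDiag M ∧ HasSpanningTree M) {i j : Fin N}
    (h : Disjoint (rowSupport L.prod i) (rowSupport L.prod j)) :
    L.length + 2 ≤ #(rowSupport L.prod i ∪ rowSupport L.prod j) := by
  induction L using List.reverseRecOn with
  | nil =>
    rw [List.prod_nil, rowSupport_one, rowSupport_one, disjoint_singleton] at h
    simp [rowSupport_one, card_pair h]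
  | append_singleton L M ih =>
    rw [List.forall_mem_append, List.forall_mem_singleton] at hL
    obtain ⟨hL, hM, htree⟩ := hL
    have hP := IsNonnegPosDiag.list_prod fun A hA => (hL A hA).1
    rw [List.prod_append, List.prod_singleton, rowSupport_mul hP.1 hM.1,
      rowSupport_mul hP.1 hM.1] at h ⊢
    have hgrow := htree.card_union_lt_of_disjoint_inNeighbors hM.2
      ⟨i, hP.self_mem_rowSupport i⟩ ⟨j, hP.self_mem_rowSupport j⟩ h
    have hbefore := ih hL (h.mono (subset_inNeighbors hM.2 _) (subset_inNeighbors hM.2 _))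
    rw [List.length_append, List.length_singleton]
    omega

lemma scrambling_iff_not_disjoint_rowSupport (B : Matrix (Fin N) (Fin N) ℝ) :
    Scrambling B ↔ ∀ i j, ¬Disjoint (rowSupport B i) (rowSupport B j) := by
  simp [Scrambling, not_disjoint_iff, rowSupport]

end

theorem product_scrambling_general {N : ℕ}
    (A : Fin (N - 1) → Matrix (Fin N) (Fin N) ℝ)
    (hpos : ∀ i, ∀ k l, 0 ≤ A i k l)
    (hdiag : ∀ i, ∀ k, 0 < A i k k)
    (htree : ∀ i, HasSpanningTree (A i)) :
    Scrambling (List.ofFn A).prod := by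
  rw [scrambling_iff_not_disjoint_rowSupport]
  intro i j hdisj
  have hL : ∀ M ∈ List.ofFn A, IsNonnegPosDiag M ∧ HasSpanningTree M :=
    List.forall_mem_ofFn_iff.2 fun m => ⟨⟨hpos m, hdiag m⟩, htree m⟩
  have hgrow := length_add_two_le_card_rowSupport_union hL hdisj
  have hbound := card_le_univ (rowSupport (List.ofFn A).prod i ∪ rowSupport (List.ofFn A).prod j)
  rw [List.length_ofFn, Fintype.card_fin] at *
  omega

theorem product_scrambling {N : ℕ} (hN : 1 ≤ N)
    (A : Fin (N - 1) → Matrix (Fin N) (Fin N) ℝ)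
    (hpos : ∀ i, ∀ k l, 0 ≤ A i k l)
    (hdiag : ∀ i, ∀ k, 0 < A i k k)
    (htree : ∀ i, HasSpanningTree (A i)) :
    Scrambling (List.ofFn A).prod :=
  product_scrambling_general A hpos hdiag htree
end
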